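/- SISO Rosenbrock corollary: with the zero-subspace transformation and (A,B,C) of relative degree ρ, for every s ∈ 𝕜 the (n+1)×(n+1) Rosenbrock system matrix [[s·I_n − A, B], [C, 0]] is singular (its determinant is 0) if and only if det(s·I_{l_z} − A_η) = 0; i.e., the invariant zeros of the SISO system (A,B,C) with D = 0 are exactly the eigenvalues of A_η. -/
import Mathlib


open Matrix

/-- Helper: if row `a` of `P` coincides with row `a'` of `Q`, then the same holds
after right-multiplication by any matrix. -/
lemma stmt15_row_eq_mul {R : Type*} [CommRing R] {ι κ μ ν : Type*} [Fintype κ]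
    (P : Matrix ι κ R) (Q : Matrix μ κ R) (a : ι) (a' : μ)
    (h : ∀ k, P a k = Q a' k) (X : Matrix κ ν R) (c : ν) :
    (P * X) a c = (Q * X) a' c := by
  simp only [Matrix.mul_apply]
  exact Finset.sum_congr rfl fun k _ => by rw [h k]

/-- Helper: summing against a delta-like function. -/
lemma stmt15_sum_delta {R : Type*} [CommRing R] {m : ℕ} (v : Fin m → R) (a : Fin m) (c : R)
    (f : Fin m → R) (hf : ∀ k, f k = if (k : ℕ) = (a : ℕ) then c else 0) :
    ∑ k, f k * v k = c * v a := by
  have h : ∀ k, f k * v k = if k = a then c * v a else 0 := by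
    intro k
    rw [hf]
    by_cases h : k = a
    · subst h; simp
    · rw [if_neg (by simpa [Fin.ext_iff] using h), if_neg h, zero_mul]
  rw [Finset.sum_congr rfl fun k _ => h k]
  simp

/-- Helper: summing against a delta-like function on the right. -/
lemma stmt15_sum_delta' {R : Type*} [CommRing R] {m : ℕ} (v : Fin m → R) (a : Fin m) (c : R)
    (f : Fin m → R) (hf : ∀ k, f k = if (k : ℕ) = (a : ℕ) then c else 0) :
    ∑ k, v k * f k = v a * c := by
  have h : ∀ k, v k * f k = if k = a then v a * c else 0 := by
    intro k
    rw [hf]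
    by_cases h : k = a
    · subst h; simp
    · rw [if_neg (by simpa [Fin.ext_iff] using h), if_neg h, mul_zero]
  rw [Finset.sum_congr rfl fun k _ => h k]
  simp

set_option maxHeartbeats 2000000 in
/-- **SISO Rosenbrock corollary.** For every `s`, the Rosenbrock
system matrix `[[s I - A, B], [C, 0]]` is singular iff `det(s I - A_η) = 0`: the invariant
zeros of the SISO system `(A, B, C)` with `D = 0` are exactly the eigenvalues of `A_η`. -/
theorem stmt15 {𝕜 : Type*} [Field 𝕜] {n ρ : ℕ} (hn : 1 ≤ n) (hρ : 1 ≤ ρ) (hρn : ρ ≤ n)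
    (A : Matrix (Fin n) (Fin n) 𝕜) (B : Matrix (Fin n) (Fin 1) 𝕜)
    (C : Matrix (Fin 1) (Fin n) 𝕜)
    (hrd : ∀ i : ℕ, i + 2 ≤ ρ → C * A ^ i * B = 0)
    (hrd' : C * A ^ (ρ - 1) * B ≠ 0)
    (Cbar : Matrix (Fin ρ) (Fin n) 𝕜)
    (hCbar : ∀ (i : Fin ρ) (j : Fin n), Cbar i j = (C * A ^ (i : ℕ)) 0 j)
    (Bz : Matrix (Fin (n - ρ)) (Fin n) 𝕜) (hBz : Bz * B = 0)
    (T : Matrix (Fin n) (Fin n) 𝕜)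
    (hT : ∀ (i : Fin n) (j : Fin n),
      T i j = if h : (i : ℕ) < n - ρ then Bz ⟨i, h⟩ j
              else Cbar ⟨(i : ℕ) - (n - ρ), by omega⟩ j)
    (hTinv : IsUnit T.det)
    (Seta : Matrix (Fin n) (Fin (n - ρ)) 𝕜)
    (hSeta : ∀ (i : Fin n) (k : Fin (n - ρ)), Seta i k = T⁻¹ i ⟨(k : ℕ), by omega⟩)
    (Sxi : Matrix (Fin n) (Fin ρ) 𝕜)
    (hSxi : ∀ (i : Fin n) (k : Fin ρ), Sxi i k = T⁻¹ i ⟨n - ρ + (k : ℕ), by omega⟩)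
    (Aeta : Matrix (Fin (n - ρ)) (Fin (n - ρ)) 𝕜)
    (hAeta : Aeta = Bz * A * Seta)
    :
    ∀ s : 𝕜,
      (Matrix.fromBlocks (s • (1 : Matrix (Fin n) (Fin n) 𝕜) - A) B C
        (0 : Matrix (Fin 1) (Fin 1) 𝕜)).det = 0 ↔
      (s • (1 : Matrix (Fin (n - ρ)) (Fin (n - ρ)) 𝕜) - Aeta).det = 0 := by
  intro s
  set S : Matrix (Fin n) (Fin n) 𝕜 := T⁻¹ with hSdef
  have hTS : T * S = 1 := Matrix.mul_nonsing_inv T hTinv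
  have hdetTS : T.det * S.det = 1 := by rw [← Matrix.det_mul, hTS, Matrix.det_one]
  set b : 𝕜 := (C * A ^ (ρ - 1) * B) 0 0 with hbdef
  have hb0 : b ≠ 0 := by
    intro h
    apply hrd'
    ext i j
    rw [Subsingleton.elim i 0, Subsingleton.elim j 0]
    simpa using h
  -- rows of T
  have hTrow1 : ∀ (i : ℕ) (hi : i < n - ρ) (k : Fin n),
      T ⟨i, by omega⟩ k = Bz ⟨i, hi⟩ k := by
    intro i hi k
    rw [hT]
    simp only [dif_pos hi]
  have hTrow2 : ∀ (j : ℕ) (hj : j < ρ) (k : Fin n),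
      T ⟨n - ρ + j, by omega⟩ k = (C * A ^ j) 0 k := by
    intro j hj k
    rw [hT, dif_neg (by simp), hCbar]
    simp only [show n - ρ + j - (n - ρ) = j from by omega]
  -- the transformed `A`-block
  set G : Matrix (Fin n) (Fin n) 𝕜 := T * A * S with hG
  have hGη : ∀ (i : ℕ) (hi : i < n - ρ) (j : ℕ) (hj : j < n - ρ),
      G ⟨i, by omega⟩ ⟨j, by omega⟩ = Aeta ⟨i, hi⟩ ⟨j, hj⟩ := by
    intro i hi j hj
    have h1 : G ⟨i, by omega⟩ ⟨j, by omega⟩ = (Bz * (A * S)) ⟨i, hi⟩ ⟨j, by omega⟩ := by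
      rw [hG, Matrix.mul_assoc]
      exact stmt15_row_eq_mul T Bz _ _ (hTrow1 i hi) (A * S) _
    rw [h1, hAeta, ← Matrix.mul_assoc]
    simp only [Matrix.mul_apply]
    refine Finset.sum_congr rfl fun k _ => ?_
    rw [hSeta]
  have hGξ : ∀ (i : ℕ) (hi : i + 1 < ρ) (c : Fin n),
      G ⟨n - ρ + i, by omega⟩ c = if (c : ℕ) = n - ρ + i + 1 then 1 else 0 := by
    intro i hi c
    have hrow : ∀ k, (T * A) ⟨n - ρ + i, by omega⟩ k = T ⟨n - ρ + (i + 1), by omega⟩ k := by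
      intro k
      have h1 : (T * A) ⟨n - ρ + i, by omega⟩ k = ((C * A ^ i) * A) 0 k :=
        stmt15_row_eq_mul T (C * A ^ i) _ 0 (hTrow2 i (by omega)) A k
      rw [h1, hTrow2 (i + 1) (by omega) k, Matrix.mul_assoc, ← pow_succ]
    have h2 : G ⟨n - ρ + i, by omega⟩ c = (T * S) ⟨n - ρ + (i + 1), by omega⟩ c :=
      stmt15_row_eq_mul (T * A) T _ _ hrow S c
    rw [h2, hTS, Matrix.one_apply]
    simp only [Fin.ext_iff]
    split_ifs <;> first | rfl | omega
  -- the transformed `B`-column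
  have hTB1 : ∀ (i : ℕ) (hi : i < n - ρ), (T * B) ⟨i, by omega⟩ 0 = 0 := by
    intro i hi
    rw [stmt15_row_eq_mul T Bz _ _ (hTrow1 i hi) B 0, hBz, Matrix.zero_apply]
  have hTB2 : ∀ (i : ℕ) (hi : i + 1 < ρ), (T * B) ⟨n - ρ + i, by omega⟩ 0 = 0 := by
    intro i hi
    rw [stmt15_row_eq_mul T (C * A ^ i) _ 0 (hTrow2 i (by omega)) B 0, hrd i (by omega),
      Matrix.zero_apply]
  have hTB3 : (T * B) ⟨n - ρ + (ρ - 1), by omega⟩ 0 = b := by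
    rw [stmt15_row_eq_mul T (C * A ^ (ρ - 1)) _ 0 (hTrow2 (ρ - 1) (by omega)) B 0]
  -- the transformed `C`-row
  have hCS : ∀ c : Fin n, (C * S) 0 c = if (c : ℕ) = n - ρ then 1 else 0 := by
    intro c
    have hrow : ∀ k, C 0 k = T ⟨n - ρ + 0, by omega⟩ k := by
      intro k
      rw [hTrow2 0 (by omega) k, pow_zero, Matrix.mul_one]
    rw [stmt15_row_eq_mul C T 0 _ hrow S c, hTS, Matrix.one_apply]
    simp only [Fin.ext_iff]
    split_ifs <;> first | rfl | omega
  -- the conjugated Rosenbrock matrix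
  set M : Matrix (Fin n ⊕ Fin 1) (Fin n ⊕ Fin 1) 𝕜 :=
    Matrix.fromBlocks (s • (1 : Matrix (Fin n) (Fin n) 𝕜) - G) (T * B) (C * S) 0 with hM
  have hMR : M.det = (Matrix.fromBlocks (s • (1 : Matrix (Fin n) (Fin n) 𝕜) - A) B C
      (0 : Matrix (Fin 1) (Fin 1) 𝕜)).det := by
    have hTsS : T * (s • (1 : Matrix (Fin n) (Fin n) 𝕜) - A) * S
        = s • (1 : Matrix (Fin n) (Fin n) 𝕜) - G := by
      rw [hG, Matrix.mul_sub, Matrix.sub_mul]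
      congr 1
      rw [Matrix.mul_smul, Matrix.mul_one, Matrix.smul_mul, hTS]
    have hfact : M = Matrix.fromBlocks T 0 0 (1 : Matrix (Fin 1) (Fin 1) 𝕜) *
        Matrix.fromBlocks (s • (1 : Matrix (Fin n) (Fin n) 𝕜) - A) B C 0 *
        Matrix.fromBlocks S 0 0 1 := by
      rw [Matrix.fromBlocks_multiply, Matrix.fromBlocks_multiply, hM, ← hTsS]
      congr 1 <;> simp [Matrix.mul_assoc]
    rw [hfact, Matrix.det_mul, Matrix.det_mul, Matrix.det_fromBlocks_zero₂₁,
      Matrix.det_fromBlocks_zero₂₁, Matrix.det_one, mul_one, mul_one]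
    calc T.det * (Matrix.fromBlocks (s • (1 : Matrix (Fin n) (Fin n) 𝕜) - A) B C 0).det * S.det
        = (Matrix.fromBlocks (s • (1 : Matrix (Fin n) (Fin n) 𝕜) - A) B C 0).det
            * (T.det * S.det) := by ring
      _ = _ := by rw [hdetTS, mul_one]
  -- reindexing equiv separating the η-block
  set f : (Fin n ⊕ Fin 1) → (Fin (n - ρ) ⊕ Fin (ρ + 1)) := Sum.elim
    (fun i => if h : (i : ℕ) < n - ρ then Sum.inl ⟨i, h⟩
      else Sum.inr ⟨(i : ℕ) - (n - ρ), by have := i.isLt; omega⟩)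
    (fun _ => Sum.inr ⟨ρ, by omega⟩) with hf
  set g : (Fin (n - ρ) ⊕ Fin (ρ + 1)) → (Fin n ⊕ Fin 1) := Sum.elim
    (fun j => Sum.inl ⟨j, by have := j.isLt; omega⟩)
    (fun k => if h : (k : ℕ) < ρ then Sum.inl ⟨n - ρ + k, by have := k.isLt; omega⟩
      else Sum.inr 0) with hg
  have hgf : ∀ x, g (f x) = x := by
    rintro (i | i)
    · rw [hf]
      simp only [Sum.elim_inl]
      by_cases h : (i : ℕ) < n - ρ
      · rw [dif_pos h, hg]
        rfl
      · rw [dif_neg h, hg]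
        simp only [Sum.elim_inr]
        rw [dif_pos (by have := i.isLt; simp; omega)]
        congr 1
        refine Fin.ext ?_
        have := i.isLt
        simp
        omega
    · rw [hf]
      simp only [Sum.elim_inr]
      rw [hg]
      simp only [Sum.elim_inr]
      rw [dif_neg (by simp)]
      congr 1
      exact Subsingleton.elim _ _
  have hfg : ∀ y, f (g y) = y := by
    rintro (j | k)
    · rw [hg]
      simp only [Sum.elim_inl]
      rw [hf]
      simp only [Sum.elim_inl]
      rw [dif_pos (by have := j.isLt; simpa using this)]
    · rw [hg]
      simp only [Sum.elim_inr]
      by_cases h : (k : ℕ) < ρ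
      · rw [dif_pos h, hf]
        simp only [Sum.elim_inl]
        rw [dif_neg (by simp)]
        congr 1
        exact Fin.ext (by simp)
      · rw [dif_neg h, hf]
        simp only [Sum.elim_inr]
        congr 1
        exact Fin.ext (by have := k.isLt; simp; omega)
  set e : (Fin n ⊕ Fin 1) ≃ (Fin (n - ρ) ⊕ Fin (ρ + 1)) := ⟨f, g, hgf, hfg⟩ with he
  have hesymm : ∀ y, e.symm y = g y := fun y => rfl
  -- the reindexed matrix and its blocks
  set M' : Matrix (Fin (n - ρ) ⊕ Fin (ρ + 1)) (Fin (n - ρ) ⊕ Fin (ρ + 1)) 𝕜 :=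
    Matrix.reindex e e M with hM'
  have hdetM' : M'.det = M.det := by rw [hM', Matrix.det_reindex_self]
  set X := M'.toBlocks₁₁ with hXdef
  set Y := M'.toBlocks₁₂ with hYdef
  set Z := M'.toBlocks₂₁ with hZdef
  set W := M'.toBlocks₂₂ with hWdef
  have hblocks : M' = Matrix.fromBlocks X Y Z W := (Matrix.fromBlocks_toBlocks M').symm
  -- the X block
  have hX : X = s • (1 : Matrix (Fin (n - ρ)) (Fin (n - ρ)) 𝕜) - Aeta := by
    ext i j
    have hrepr : X i j = M (Sum.inl ⟨(i : ℕ), by omega⟩) (Sum.inl ⟨(j : ℕ), by omega⟩) := rfl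
    rw [hrepr, hM, Matrix.fromBlocks_apply₁₁, Matrix.sub_apply, Matrix.smul_apply,
      Matrix.one_apply, hGη (i : ℕ) i.isLt (j : ℕ) j.isLt, Matrix.sub_apply, Matrix.smul_apply,
      Matrix.one_apply]
    have hij : ((⟨(i : ℕ), by omega⟩ : Fin n) = ⟨(j : ℕ), by omega⟩) ↔ i = j := by
      simp [Fin.ext_iff]
    split_ifs with h1 h2 h2
    · rfl
    · exact absurd (hij.mp h1) h2
    · exact absurd (hij.mpr h2) h1
    · rfl
  -- the Y block: its last column vanishes
  have hY : ∀ i : Fin (n - ρ), Y i ⟨ρ, by omega⟩ = 0 := by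
    intro i
    have hrepr : Y i ⟨ρ, by omega⟩ = M (Sum.inl ⟨(i : ℕ), by omega⟩) (Sum.inr 0) := by
      show M (g (Sum.inl i)) (g (Sum.inr ⟨ρ, by omega⟩)) = _
      rw [hg]
      simp only [Sum.elim_inl, Sum.elim_inr]
      rw [dif_neg (by simp)]
    rw [hrepr, hM, Matrix.fromBlocks_apply₁₂]
    exact hTB1 (i : ℕ) i.isLt
  -- the Z block: all rows except row `ρ - 1` vanish
  have hZ : ∀ (k : Fin (ρ + 1)) (j : Fin (n - ρ)), (k : ℕ) ≠ ρ - 1 → Z k j = 0 := by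
    intro k j hk
    by_cases h : (k : ℕ) < ρ
    · have hrepr : Z k j = M (Sum.inl ⟨n - ρ + (k : ℕ), by omega⟩)
          (Sum.inl ⟨(j : ℕ), by omega⟩) := by
        show M (g (Sum.inr k)) (g (Sum.inl j)) = _
        rw [hg]
        simp only [Sum.elim_inl, Sum.elim_inr]
        rw [dif_pos h]
      rw [hrepr, hM, Matrix.fromBlocks_apply₁₁, Matrix.sub_apply, Matrix.smul_apply,
        Matrix.one_apply, hGξ (k : ℕ) (by omega)]
      rw [if_neg (by simp [Fin.ext_iff]; have := j.isLt; omega),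
        if_neg (by have := j.isLt; simp; omega)]
      simp
    · have hrepr : Z k j = M (Sum.inr 0) (Sum.inl ⟨(j : ℕ), by omega⟩) := by
        show M (g (Sum.inr k)) (g (Sum.inl j)) = _
        rw [hg]
        simp only [Sum.elim_inl, Sum.elim_inr]
        rw [dif_neg h]
      rw [hrepr, hM, Matrix.fromBlocks_apply₂₁, hCS]
      rw [if_neg (by have := j.isLt; simp; omega)]
  -- the W block
  have hW1 : ∀ (i : ℕ) (hi : i + 1 < ρ) (m : Fin (ρ + 1)),
      W ⟨i, by omega⟩ m
        = (if (m : ℕ) = i then s else 0) - (if (m : ℕ) = i + 1 then 1 else 0) := by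
    intro i hi m
    by_cases h : (m : ℕ) < ρ
    · have hrepr : W ⟨i, by omega⟩ m = M (Sum.inl ⟨n - ρ + i, by omega⟩)
          (Sum.inl ⟨n - ρ + (m : ℕ), by omega⟩) := by
        show M (g (Sum.inr ⟨i, by omega⟩)) (g (Sum.inr m)) = _
        rw [hg]
        simp only [Sum.elim_inr]
        rw [dif_pos (show ((⟨i, by omega⟩ : Fin (ρ + 1)) : ℕ) < ρ by simp only [Fin.val_mk]; omega), dif_pos h]
      rw [hrepr, hM, Matrix.fromBlocks_apply₁₁, Matrix.sub_apply, Matrix.smul_apply,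
        Matrix.one_apply, hGξ i hi]
      simp only [Fin.ext_iff, Fin.val_mk, smul_eq_mul]
      split_ifs <;> first | ring1 | (exfalso; omega)
    · have hm : (m : ℕ) = ρ := by have := m.isLt; omega
      have hrepr : W ⟨i, by omega⟩ m = M (Sum.inl ⟨n - ρ + i, by omega⟩) (Sum.inr 0) := by
        show M (g (Sum.inr ⟨i, by omega⟩)) (g (Sum.inr m)) = _
        rw [hg]
        simp only [Sum.elim_inr]
        rw [dif_pos (show ((⟨i, by omega⟩ : Fin (ρ + 1)) : ℕ) < ρ by simp only [Fin.val_mk]; omega), dif_neg h]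
      rw [hrepr, hM, Matrix.fromBlocks_apply₁₂, hTB2 i hi,
        if_neg (by omega), if_neg (by omega), sub_zero]
  have hW2 : W ⟨ρ - 1, by omega⟩ ⟨ρ, by omega⟩ = b := by
    have hrepr : W ⟨ρ - 1, by omega⟩ ⟨ρ, by omega⟩
        = M (Sum.inl ⟨n - ρ + (ρ - 1), by omega⟩) (Sum.inr 0) := by
      show M (g (Sum.inr ⟨ρ - 1, by omega⟩)) (g (Sum.inr ⟨ρ, by omega⟩)) = _
      rw [hg]
      simp only [Sum.elim_inr]
      rw [dif_pos (show ((⟨ρ - 1, by omega⟩ : Fin (ρ + 1)) : ℕ) < ρ by simp only [Fin.val_mk]; omega),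
        dif_neg (by simp)]
    rw [hrepr, hM, Matrix.fromBlocks_apply₁₂, hTB3]
  have hW3 : ∀ m : Fin (ρ + 1), W ⟨ρ, by omega⟩ m = if (m : ℕ) = 0 then 1 else 0 := by
    intro m
    by_cases h : (m : ℕ) < ρ
    · have hrepr : W ⟨ρ, by omega⟩ m = M (Sum.inr 0) (Sum.inl ⟨n - ρ + (m : ℕ), by omega⟩) := by
        show M (g (Sum.inr ⟨ρ, by omega⟩)) (g (Sum.inr m)) = _
        rw [hg]
        simp only [Sum.elim_inr]
        rw [dif_neg (by simp), dif_pos h]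
      rw [hrepr, hM, Matrix.fromBlocks_apply₂₁, hCS]
      simp only [Fin.val_mk]
      split_ifs <;> first | rfl | (exfalso; omega)
    · have hm : (m : ℕ) = ρ := by have := m.isLt; omega
      have hrepr : W ⟨ρ, by omega⟩ m = M (Sum.inr 0) (Sum.inr 0) := by
        show M (g (Sum.inr ⟨ρ, by omega⟩)) (g (Sum.inr m)) = _
        rw [hg]
        simp only [Sum.elim_inr]
        rw [dif_neg (by simp), dif_neg h]
      rw [hrepr, hM, Matrix.fromBlocks_apply₂₂, Matrix.zero_apply, if_neg (by omega)]
  have hW4 : ∀ k : Fin (ρ + 1), W k ⟨ρ, by omega⟩ = if (k : ℕ) = ρ - 1 then b else 0 := by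
    intro k
    by_cases hk : (k : ℕ) = ρ - 1
    · have : k = ⟨ρ - 1, by omega⟩ := Fin.ext hk
      rw [this, hW2, if_pos rfl]
    · rw [if_neg hk]
      by_cases h : (k : ℕ) < ρ
      · have : k = ⟨(k : ℕ), by omega⟩ := Fin.ext rfl
        rw [this, hW1 (k : ℕ) (by omega) ⟨ρ, by omega⟩]
        rw [if_neg (by simp only [Fin.val_mk]; omega), if_neg (by simp only [Fin.val_mk]; omega), sub_zero]
      · have : k = ⟨ρ, by omega⟩ := Fin.ext (by simp only [Fin.val_mk]; have := k.isLt; omega)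
        rw [this, hW3, if_neg (by simp only [Fin.val_mk]; omega)]
  -- W is invertible
  have hdetW : W.det ≠ 0 := by
    intro h0
    obtain ⟨v, hv, hWv⟩ := Matrix.exists_mulVec_eq_zero_iff.mpr h0
    have hrowsum : ∀ m : Fin (ρ + 1), ∑ k, W m k * v k = 0 := by
      intro m
      have := congrFun hWv m
      simpa [Matrix.mulVec, dotProduct] using this
    have hv0 : ∀ (i : ℕ) (hi : i < ρ), v ⟨i, by omega⟩ = 0 := by
      intro i
      induction i with
      | zero =>
        intro _
        have h := hrowsum ⟨ρ, by omega⟩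
        rw [stmt15_sum_delta v ⟨0, by omega⟩ 1 _ (fun k => by rw [hW3 k])] at h
        simpa using h
      | succ i ih =>
        intro hi
        have h := hrowsum ⟨i, by omega⟩
        have hsplit : ∀ k : Fin (ρ + 1), W ⟨i, by omega⟩ k * v k
            = (if (k : ℕ) = i then s else 0) * v k - (if (k : ℕ) = i + 1 then 1 else 0) * v k := by
          intro k
          rw [hW1 i (by omega) k, sub_mul]
        rw [Finset.sum_congr rfl fun k _ => hsplit k, Finset.sum_sub_distrib,
          stmt15_sum_delta v ⟨i, by omega⟩ s _ (fun k => rfl),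
          stmt15_sum_delta v ⟨i + 1, by omega⟩ 1 _ (fun k => rfl)] at h
        rw [ih (by omega)] at h
        have := h
        rw [mul_zero, one_mul, zero_sub, neg_eq_zero] at this
        exact this
    have hvρ : v ⟨ρ, by omega⟩ = 0 := by
      have h := hrowsum ⟨ρ - 1, by omega⟩
      rw [Finset.sum_eq_single (⟨ρ, by omega⟩ : Fin (ρ + 1))] at h
      · rw [hW2] at h
        rcases mul_eq_zero.mp h with hb' | hv'
        · exact absurd hb' hb0
        · exact hv'
      · intro k _ hk
        have hkρ : (k : ℕ) < ρ := by
          have := k.isLt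
          rcases Nat.lt_or_ge (k : ℕ) ρ with h' | h'
          · exact h'
          · exact absurd (Fin.ext (by simp only [Fin.val_mk]; omega)) hk
        have : v k = 0 := by
          have := hv0 (k : ℕ) hkρ
          rwa [show (⟨(k : ℕ), by omega⟩ : Fin (ρ + 1)) = k from Fin.ext rfl] at this
        rw [this, mul_zero]
      · intro h'
        exact absurd (Finset.mem_univ _) h'
    apply hv
    funext k
    by_cases h : (k : ℕ) < ρ
    · have := hv0 (k : ℕ) h
      rwa [show (⟨(k : ℕ), by omega⟩ : Fin (ρ + 1)) = k from Fin.ext rfl] at this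
    · have : k = ⟨ρ, by omega⟩ := Fin.ext (by simp only [Fin.val_mk]; have := k.isLt; omega)
      rw [this]
      exact hvρ
  haveI : Invertible W := W.invertibleOfIsUnitDet (isUnit_iff_ne_zero.mpr hdetW)
  -- the Schur complement correction term vanishes
  have hYWZ : Y * ⅟W * Z = 0 := by
    set N : Matrix (Fin (ρ + 1)) (Fin (n - ρ)) 𝕜 :=
      Matrix.of fun k j => if (k : ℕ) = ρ then b⁻¹ * Z ⟨ρ - 1, by omega⟩ j else 0 with hN
    have hWN : W * N = Z := by
      ext m j
      rw [Matrix.mul_apply]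
      rw [stmt15_sum_delta' (W m) ⟨ρ, by omega⟩ (b⁻¹ * Z ⟨ρ - 1, by omega⟩ j) (fun k => N k j)
        (fun k => by simp only [hN, Matrix.of_apply, Fin.val_mk])]
      rw [hW4 m]
      by_cases hm : (m : ℕ) = ρ - 1
      · rw [if_pos hm, ← mul_assoc, mul_inv_cancel₀ hb0, one_mul]
        congr 1
        exact Fin.ext hm.symm
      · rw [if_neg hm, zero_mul, (hZ m j hm).symm]
    have hinv : ⅟W * Z = N := by
      rw [← hWN, ← Matrix.mul_assoc, invOf_mul_self, Matrix.one_mul]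
    rw [Matrix.mul_assoc, hinv]
    ext i j
    rw [Matrix.mul_apply,
      stmt15_sum_delta' (Y i) ⟨ρ, by omega⟩ (b⁻¹ * Z ⟨ρ - 1, by omega⟩ j) (fun k => N k j)
        (fun k => by simp only [hN, Matrix.of_apply, Fin.val_mk]),
      hY i, zero_mul]
    rfl
  -- assemble
  have hdetfinal : M.det = W.det * (s • (1 : Matrix (Fin (n - ρ)) (Fin (n - ρ)) 𝕜) - Aeta).det := by
    rw [← hdetM', hblocks, Matrix.det_fromBlocks₂₂, hYWZ, sub_zero, hX]
  rw [← hMR, hdetfinal]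
  constructor
  · intro h
    rcases mul_eq_zero.mp h with h' | h'
    · exact absurd h' hdetW
    · exact h'
  · intro h
    rw [h, mul_zero]
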